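/- Let ρ be an object of a regular C*-tensor category with conjugate ρ̄ and standard pair of conjugation operators (R,R̄). Let ρ̃ be any conjugate of ρ and T ∈ (ι,ρ̃ρ). Then there exists T̄ ∈ (ι,ρρ̃) such that (T,T̄) is a standard pair of conjugation operators if and only if there is a unitary U ∈ (ρ̄,ρ̃) such that (U×1_ρ)∘R = T. -/

import Mathlib

noncomputable section

/-- A strict `C*`-tensor category: a `C*`-category (Banach morphism spaces,
submultiplicative bilinear composition, antilinear involutive contravariant
`*` with the `C*`-identity, nonzero endomorphism spaces) with a bilinear
tensor product which is strictly associative and strictly unital on objects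
and on morphisms (the associativity and unit constraints being identities). -/
structure StrictCTC where
  Obj : Type
  Hom : Obj → Obj → Type
  [normed : ∀ ρ σ : Obj, NormedAddCommGroup (Hom ρ σ)]
  [normedSpace : ∀ ρ σ : Obj, NormedSpace ℂ (Hom ρ σ)]
  [complete : ∀ ρ σ : Obj, CompleteSpace (Hom ρ σ)]
  id : ∀ ρ : Obj, Hom ρ ρ
  comp : ∀ {ρ σ τ : Obj}, Hom σ τ → Hom ρ σ → Hom ρ τ
  comp_id : ∀ {ρ σ : Obj} (f : Hom ρ σ), comp f (id ρ) = f
  id_comp : ∀ {ρ σ : Obj} (f : Hom ρ σ), comp (id σ) f = f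
  comp_assoc : ∀ {ρ σ τ υ : Obj} (f : Hom τ υ) (g : Hom σ τ) (h : Hom ρ σ),
    comp (comp f g) h = comp f (comp g h)
  comp_add_left : ∀ {ρ σ τ : Obj} (f g : Hom σ τ) (h : Hom ρ σ),
    comp (f + g) h = comp f h + comp g h
  comp_add_right : ∀ {ρ σ τ : Obj} (f : Hom σ τ) (g h : Hom ρ σ),
    comp f (g + h) = comp f g + comp f h
  comp_smul_left : ∀ {ρ σ τ : Obj} (c : ℂ) (f : Hom σ τ) (h : Hom ρ σ),
    comp (c • f) h = c • comp f h
  comp_smul_right : ∀ {ρ σ τ : Obj} (c : ℂ) (f : Hom σ τ) (h : Hom ρ σ),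
    comp f (c • h) = c • comp f h
  norm_comp_le : ∀ {ρ σ τ : Obj} (f : Hom σ τ) (g : Hom ρ σ),
    ‖comp f g‖ ≤ ‖f‖ * ‖g‖
  star : ∀ {ρ σ : Obj}, Hom ρ σ → Hom σ ρ
  star_star : ∀ {ρ σ : Obj} (f : Hom ρ σ), star (star f) = f
  star_id : ∀ ρ : Obj, star (id ρ) = id ρ
  star_comp : ∀ {ρ σ τ : Obj} (f : Hom σ τ) (g : Hom ρ σ),
    star (comp f g) = comp (star g) (star f)
  star_add : ∀ {ρ σ : Obj} (f g : Hom ρ σ), star (f + g) = star f + star g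
  star_smul : ∀ {ρ σ : Obj} (c : ℂ) (f : Hom ρ σ),
    star (c • f) = (starRingEnd ℂ c) • star f
  cstar_norm : ∀ {ρ σ : Obj} (f : Hom ρ σ), ‖comp (star f) f‖ = ‖f‖ ^ 2
  id_ne_zero : ∀ ρ : Obj, id ρ ≠ 0
  -- the strict tensor structure
  tObj : Obj → Obj → Obj
  tHom : ∀ {ρ σ ρ' σ' : Obj}, Hom ρ σ → Hom ρ' σ' → Hom (tObj ρ ρ') (tObj σ σ')
  tHom_add_left : ∀ {ρ σ ρ' σ' : Obj} (f g : Hom ρ σ) (h : Hom ρ' σ'),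
    tHom (f + g) h = tHom f h + tHom g h
  tHom_add_right : ∀ {ρ σ ρ' σ' : Obj} (f : Hom ρ σ) (g h : Hom ρ' σ'),
    tHom f (g + h) = tHom f g + tHom f h
  tHom_smul_left : ∀ {ρ σ ρ' σ' : Obj} (c : ℂ) (f : Hom ρ σ) (h : Hom ρ' σ'),
    tHom (c • f) h = c • tHom f h
  tHom_smul_right : ∀ {ρ σ ρ' σ' : Obj} (c : ℂ) (f : Hom ρ σ) (h : Hom ρ' σ'),
    tHom f (c • h) = c • tHom f h
  star_tHom : ∀ {ρ σ ρ' σ' : Obj} (f : Hom ρ σ) (g : Hom ρ' σ'),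
    star (tHom f g) = tHom (star f) (star g)
  tHom_id : ∀ ρ σ : Obj, tHom (id ρ) (id σ) = id (tObj ρ σ)
  interchange : ∀ {ρ σ τ ρ' σ' τ' : Obj}
    (S : Hom σ τ) (S' : Hom σ' τ') (T : Hom ρ σ) (T' : Hom ρ' σ'),
    comp (tHom S S') (tHom T T') = tHom (comp S T) (comp S' T')
  unit : Obj
  tObj_assoc : ∀ ρ σ τ : Obj, tObj ρ (tObj σ τ) = tObj (tObj ρ σ) τ
  unit_tObj : ∀ ρ : Obj, tObj unit ρ = ρ
  tObj_unit : ∀ ρ : Obj, tObj ρ unit = ρ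
  tHom_assoc : ∀ {ρ ρ' σ σ' τ τ' : Obj}
    (f : Hom ρ ρ') (g : Hom σ σ') (h : Hom τ τ'),
    HEq (tHom f (tHom g h)) (tHom (tHom f g) h)
  id_unit_tHom : ∀ {ρ σ : Obj} (f : Hom ρ σ), HEq (tHom (id unit) f) f
  tHom_id_unit : ∀ {ρ σ : Obj} (f : Hom ρ σ), HEq (tHom f (id unit)) f

attribute [instance] StrictCTC.normed StrictCTC.normedSpace StrictCTC.complete

namespace StrictCTC

variable (C : StrictCTC)

/-- The identity morphism transported along an equality of objects.  In a
strict `C*`-tensor category the associativity and unit constraints are the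
morphisms `eqHom (tObj_assoc ρ σ τ)`, `eqHom (unit_tObj ρ)`, `eqHom (tObj_unit ρ)`. -/
def eqHom : ∀ {ρ σ : C.Obj}, ρ = σ → C.Hom ρ σ
  | _, _, rfl => C.id _

/-- A unitary morphism. -/
def IsUnitary {ρ σ : C.Obj} (u : C.Hom ρ σ) : Prop :=
  C.comp (C.star u) u = C.id ρ ∧ C.comp u (C.star u) = C.id σ

/-- A (linear) isometry. -/
def IsIsometry {ρ σ : C.Obj} (V : C.Hom ρ σ) : Prop :=
  C.comp (C.star V) V = C.id ρ

/-- An (orthogonal) projection. -/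
def IsProjection {ρ : C.Obj} (E : C.Hom ρ ρ) : Prop :=
  C.comp E E = E ∧ C.star E = E

/-- Two objects are equivalent if there is a unitary morphism between them. -/
def Equivalent (ρ σ : C.Obj) : Prop :=
  ∃ u : C.Hom ρ σ, C.IsUnitary u

/-- An object `ρ` is irreducible if `(ρ,ρ) = ℂ 1_ρ`. -/
def Irreducible (ρ : C.Obj) : Prop :=
  ∀ f : C.Hom ρ ρ, ∃ c : ℂ, f = c • C.id ρ

/-- `σ` is a subobject of `ρ`:  there is a linear isometry `V ∈ (σ, ρ)`. -/
def Subobject (σ ρ : C.Obj) : Prop :=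
  ∃ V : C.Hom σ ρ, C.IsIsometry V

end StrictCTC

open StrictCTC

/-- A strict `C*`-tensor category is regular if it has subobjects (every
projection comes from an isometry), has finite direct sums, and the unit
object satisfies `(ι,ι) = ℂ 1_ι`. -/
structure IsRegularCTC (C : StrictCTC) : Prop where
  hasSubobjects : ∀ {ρ : C.Obj} (E : C.Hom ρ ρ), C.IsProjection E →
    ∃ (σ : C.Obj) (V : C.Hom σ ρ), C.IsIsometry V ∧ C.comp V (C.star V) = E
  hasSums : ∀ ρ σ : C.Obj, ∃ (τ : C.Obj) (V : C.Hom ρ τ) (W : C.Hom σ τ),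
    C.IsIsometry V ∧ C.IsIsometry W ∧
    C.comp V (C.star V) + C.comp W (C.star W) = C.id τ
  unit_irreducible : C.Irreducible C.unit

namespace StrictCTC

variable (C : StrictCTC)

/-- `(R, R̄)` is a pair of conjugation operators for `ρ` and `ρ̄`, witnessing
that `ρ̄` is conjugate to `ρ`:  `(R̄* × 1_ρ) ∘ (1_ρ × R) = 1_ρ` and
`(R* × 1_ρ̄) ∘ (1_ρ̄ × R̄) = 1_ρ̄` (written with the strict unit and
associativity identifications made explicit by `eqHom`). -/
def ConjPair (ρ ρb : C.Obj)
    (R : C.Hom C.unit (C.tObj ρb ρ)) (Rb : C.Hom C.unit (C.tObj ρ ρb)) : Prop :=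
  C.comp (C.eqHom (C.unit_tObj ρ))
      (C.comp (C.tHom (C.star Rb) (C.id ρ))
        (C.comp (C.eqHom (C.tObj_assoc ρ ρb ρ))
          (C.comp (C.tHom (C.id ρ) R) (C.eqHom (C.tObj_unit ρ).symm)))) = C.id ρ ∧
  C.comp (C.eqHom (C.unit_tObj ρb))
      (C.comp (C.tHom (C.star R) (C.id ρb))
        (C.comp (C.eqHom (C.tObj_assoc ρb ρ ρb))
          (C.comp (C.tHom (C.id ρb) Rb) (C.eqHom (C.tObj_unit ρb).symm)))) = C.id ρb

/-- `ρb` is conjugate to `ρ`. -/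
def Conjugate (ρ ρb : C.Obj) : Prop :=
  ∃ (R : C.Hom C.unit (C.tObj ρb ρ)) (Rb : C.Hom C.unit (C.tObj ρ ρb)),
    C.ConjPair ρ ρb R Rb

/-- A standard pair of conjugation operators for an irreducible object `ρ`:
a pair of conjugation operators with `R* ∘ R = R̄* ∘ R̄`. -/
def IsStandardPairIrr (ρ ρb : C.Obj)
    (R : C.Hom C.unit (C.tObj ρb ρ)) (Rb : C.Hom C.unit (C.tObj ρ ρb)) : Prop :=
  C.Irreducible ρ ∧ C.ConjPair ρ ρb R Rb ∧
    C.comp (C.star R) R = C.comp (C.star Rb) Rb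

/-- A standard pair of conjugation operators for `ρ` and `ρb`:  a pair of
conjugation operators of the form `R = Σᵢ (W̄ᵢ × Wᵢ) ∘ Rᵢ`,
`R̄ = Σᵢ (Wᵢ × W̄ᵢ) ∘ R̄ᵢ` for decompositions `1_ρ = Σᵢ Wᵢ ∘ Wᵢ*`,
`1_ρ̄ = Σᵢ W̄ᵢ ∘ W̄ᵢ*` into isometries from irreducible objects `σᵢ` (with
conjugates `σ̄ᵢ`) and standard pairs `(Rᵢ, R̄ᵢ)` for the irreducible `σᵢ`. -/
def IsStandardPair (ρ ρb : C.Obj)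
    (R : C.Hom C.unit (C.tObj ρb ρ)) (Rb : C.Hom C.unit (C.tObj ρ ρb)) : Prop :=
  C.ConjPair ρ ρb R Rb ∧
  ∃ (n : ℕ) (σ σb : Fin n → C.Obj)
    (W : ∀ i, C.Hom (σ i) ρ) (Wb : ∀ i, C.Hom (σb i) ρb)
    (Ri : ∀ i, C.Hom C.unit (C.tObj (σb i) (σ i)))
    (Rbi : ∀ i, C.Hom C.unit (C.tObj (σ i) (σb i))),
    (∀ i, C.IsIsometry (W i)) ∧ (∀ i, C.IsIsometry (Wb i)) ∧
    (∑ i, C.comp (W i) (C.star (W i))) = C.id ρ ∧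
    (∑ i, C.comp (Wb i) (C.star (Wb i))) = C.id ρb ∧
    (∀ i, C.IsStandardPairIrr (σ i) (σb i) (Ri i) (Rbi i)) ∧
    R = ∑ i, C.comp (C.tHom (Wb i) (W i)) (Ri i) ∧
    Rb = ∑ i, C.comp (C.tHom (W i) (Wb i)) (Rbi i)

end StrictCTC

/-! For pairs of conjugation operators `(R, R̄)` and `(T, T̄)` of `ρ`, the morphism
`U = snakeL T R̄ = (1 ⊗ R̄†) ∘ (T ⊗ 1)` satisfies `(U ⊗ 1) ∘ R = T`, has the inverse `snakeL R T̄`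
and the adjoint `snakeR R̄ T`; so `U` is unitary iff `snakeR R̄ T = snakeL R T̄`. For standard pairs
this identity splits along the irreducible summands, and between irreducible objects it holds
because standardness and positivity force the comparison morphism of two standard pairs to be
unitary. Conversely, a unitary `U` carries a standard decomposition of `(R, R̄)` to one of
`((U ⊗ 1) ∘ R, (1 ⊗ U) ∘ R̄)`. -/

namespace StrictCTC

variable {C : StrictCTC}

scoped infixr:80 " ⊚ " => StrictCTC.comp _
scoped infixr:85 " ⊗̂ " => StrictCTC.tHom _
scoped infixr:75 " ⊙ " => StrictCTC.tObj _
scoped postfix:max "†" => StrictCTC.star _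
scoped notation "𝟙 " ρ:max => StrictCTC.id _ ρ

section Transport

def castHom {ρ σ ρ' σ' : C.Obj} (h : ρ = ρ') (k : σ = σ') (f : C.Hom ρ σ) : C.Hom ρ' σ' :=
  h ▸ k ▸ f

theorem castHom_rfl {ρ σ : C.Obj} (h : ρ = ρ) (k : σ = σ) (f : C.Hom ρ σ) :
    castHom h k f = f := rfl

theorem castHom_castHom {ρ σ ρ' σ' ρ'' σ'' : C.Obj}
    (h : ρ = ρ') (k : σ = σ') (h' : ρ' = ρ'') (k' : σ' = σ'') (f : C.Hom ρ σ) :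
    castHom h' k' (castHom h k f) = castHom (h.trans h') (k.trans k') f := by
  subst h k h' k'; rfl

theorem castHom_heq {ρ σ ρ' σ' : C.Obj} (h : ρ = ρ') (k : σ = σ') (f : C.Hom ρ σ) :
    HEq (castHom h k f) f := by
  subst h k; rfl

theorem heq_iff_castHom_eq {ρ σ ρ' σ' : C.Obj} {h : ρ = ρ'} {k : σ = σ'}
    {f : C.Hom ρ σ} {g : C.Hom ρ' σ'} : HEq f g ↔ castHom h k f = g := by
  subst h k; exact heq_iff_eq

theorem castHom_eq_iff {ρ σ ρ' σ' : C.Obj} {h : ρ = ρ'} {k : σ = σ'}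
    {f : C.Hom ρ σ} {g : C.Hom ρ' σ'} : castHom h k f = g ↔ f = castHom h.symm k.symm g := by
  subst h k; exact Iff.rfl

theorem eqHom_eq_castHom {ρ σ : C.Obj} (h : ρ = σ) : C.eqHom h = castHom rfl h (𝟙 ρ) := by
  subst h; rfl

theorem heq_tHom {ρ σ ρ' σ' τ υ τ' υ' : C.Obj}
    (h₁ : ρ = τ) (h₂ : σ = υ) (h₃ : ρ' = τ') (h₄ : σ' = υ')
    {f : C.Hom ρ σ} {f' : C.Hom τ υ} {g : C.Hom ρ' σ'} {g' : C.Hom τ' υ'}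
    (hf : HEq f f') (hg : HEq g g') : HEq (f ⊗̂ g) (f' ⊗̂ g') := by
  subst h₁ h₂ h₃ h₄; rw [eq_of_heq hf, eq_of_heq hg]

theorem castHom_comp_castHom {ρ σ τ ρ' σ' τ' : C.Obj}
    (h : σ = σ') (k : τ = τ') (h' : ρ = ρ') (f : C.Hom σ τ) (g : C.Hom ρ σ) :
    castHom h k f ⊚ castHom h' h g = castHom h' k (f ⊚ g) := by
  subst h k h'; rfl

theorem castHom_comp_castHom' {ρ ρ' σ₀ σ₁ σ' τ τ' : C.Obj}
    (h : σ₀ = σ') (k : τ = τ') (h' : ρ = ρ') (k' : σ₁ = σ')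
    (f : C.Hom σ₀ τ) (g : C.Hom ρ σ₁) :
    castHom h k f ⊚ castHom h' k' g = castHom h' k (f ⊚ castHom rfl (k'.trans h.symm) g) := by
  subst h k h' k'; rfl

theorem castHom_comp {ρ σ σ' τ : C.Obj} (h : σ = σ') (k : τ = τ)
    (f : C.Hom σ τ) (g : C.Hom ρ σ') :
    castHom h k f ⊚ g = f ⊚ castHom rfl h.symm g := by
  subst h; rfl

theorem comp_castHom {ρ ρ' σ τ : C.Obj} (h : ρ = ρ') (k : σ = σ)
    (f : C.Hom σ τ) (g : C.Hom ρ σ) :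
    f ⊚ castHom h k g = castHom h rfl (f ⊚ g) := by
  subst h; rfl

theorem comp_castHom' {ρ ρ' σ₀ σ₁ τ : C.Obj}
    (h : ρ = ρ') (k : σ₁ = σ₀) (f : C.Hom σ₀ τ) (g : C.Hom ρ σ₁) :
    f ⊚ castHom h k g = castHom h rfl (f ⊚ castHom rfl k g) := by
  subst h; rfl

theorem castHom_target_comp {ρ σ τ τ' : C.Obj} (k : τ = τ') (h : σ = σ)
    (f : C.Hom σ τ) (g : C.Hom ρ σ) :
    castHom h k f ⊚ g = castHom rfl k (f ⊚ g) := by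
  subst k; rfl

theorem comp_castHom_id {ρ σ τ : C.Obj} (k : ρ = σ) (f : C.Hom σ τ) :
    f ⊚ castHom rfl k (𝟙 ρ) = castHom k.symm rfl f := by
  subst k; exact C.comp_id f

theorem castHom_id_comp {ρ σ τ : C.Obj} (k : σ = τ) (f : C.Hom ρ σ) :
    castHom rfl k (𝟙 σ) ⊚ f = castHom rfl k f := by
  subst k; exact C.id_comp f

theorem star_castHom {ρ σ ρ' σ' : C.Obj} (h : ρ = ρ') (k : σ = σ') (f : C.Hom ρ σ) :
    (castHom h k f)† = castHom k h f† := by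
  subst h k; rfl

theorem tHom_castHom_left {ρ₁ σ₁ ρ₂ σ₂ ρ₁' σ₁' : C.Obj} (h : ρ₁ = ρ₁') (k : σ₁ = σ₁')
    (H : ρ₁ ⊙ ρ₂ = ρ₁' ⊙ ρ₂) (K : σ₁ ⊙ σ₂ = σ₁' ⊙ σ₂) (f : C.Hom ρ₁ σ₁) (g : C.Hom ρ₂ σ₂) :
    castHom h k f ⊗̂ g = castHom H K (f ⊗̂ g) := by
  subst h k; rfl

theorem tHom_castHom_right {ρ₁ σ₁ ρ₂ σ₂ ρ₂' σ₂' : C.Obj} (h : ρ₂ = ρ₂') (k : σ₂ = σ₂')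
    (H : ρ₁ ⊙ ρ₂ = ρ₁ ⊙ ρ₂') (K : σ₁ ⊙ σ₂ = σ₁ ⊙ σ₂') (f : C.Hom ρ₁ σ₁) (g : C.Hom ρ₂ σ₂) :
    f ⊗̂ castHom h k g = castHom H K (f ⊗̂ g) := by
  subst h k; rfl

theorem castHom_smul {ρ σ ρ' σ' : C.Obj} (h : ρ = ρ') (k : σ = σ') (c : ℂ)
    (f : C.Hom ρ σ) : castHom h k (c • f) = c • castHom h k f := by
  subst h k; rfl

theorem castHom_zero {ρ σ ρ' σ' : C.Obj} (h : ρ = ρ') (k : σ = σ') :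
    castHom h k (0 : C.Hom ρ σ) = 0 := by
  subst h k; rfl

theorem castHom_sum {ρ σ ρ' σ' : C.Obj} (h : ρ = ρ') (k : σ = σ') {n : ℕ}
    (f : Fin n → C.Hom ρ σ) : castHom h k (∑ i, f i) = ∑ i, castHom h k (f i) := by
  subst h k; rfl

end Transport

section Linear

variable {ρ σ τ ρ' σ' : C.Obj} {n : ℕ}

theorem comp_zero (f : C.Hom σ τ) : f ⊚ (0 : C.Hom ρ σ) = 0 := by
  rw [← zero_smul ℂ (0 : C.Hom ρ σ), C.comp_smul_right, zero_smul]

theorem zero_comp (g : C.Hom ρ σ) : (0 : C.Hom σ τ) ⊚ g = 0 := by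
  rw [← zero_smul ℂ (0 : C.Hom σ τ), C.comp_smul_left, zero_smul]

theorem zero_tHom (g : C.Hom ρ' σ') : (0 : C.Hom ρ σ) ⊗̂ g = 0 := by
  rw [← zero_smul ℂ (0 : C.Hom ρ σ), C.tHom_smul_left, zero_smul]

theorem tHom_zero (f : C.Hom ρ σ) : f ⊗̂ (0 : C.Hom ρ' σ') = 0 := by
  rw [← zero_smul ℂ (0 : C.Hom ρ' σ'), C.tHom_smul_right, zero_smul]

theorem star_zero : (0 : C.Hom ρ σ)† = 0 := by
  rw [← zero_smul ℂ (0 : C.Hom ρ σ), C.star_smul, map_zero, zero_smul]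

theorem comp_sum (f : C.Hom σ τ) (g : Fin n → C.Hom ρ σ) : f ⊚ (∑ i, g i) = ∑ i, f ⊚ g i :=
  map_sum (AddMonoidHom.mk' (f ⊚ ·) (C.comp_add_right f)) g Finset.univ

theorem sum_comp (f : Fin n → C.Hom σ τ) (g : C.Hom ρ σ) : (∑ i, f i) ⊚ g = ∑ i, f i ⊚ g :=
  map_sum (AddMonoidHom.mk' (· ⊚ g) (C.comp_add_left · · g)) f Finset.univ

theorem sum_tHom (f : Fin n → C.Hom ρ σ) (g : C.Hom ρ' σ') : (∑ i, f i) ⊗̂ g = ∑ i, f i ⊗̂ g :=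
  map_sum (AddMonoidHom.mk' (· ⊗̂ g) (C.tHom_add_left · · g)) f Finset.univ

theorem tHom_sum (f : C.Hom ρ σ) (g : Fin n → C.Hom ρ' σ') : f ⊗̂ (∑ i, g i) = ∑ i, f ⊗̂ g i :=
  map_sum (AddMonoidHom.mk' (f ⊗̂ ·) (C.tHom_add_right f)) g Finset.univ

theorem star_sum (f : Fin n → C.Hom ρ σ) : (∑ i, f i)† = ∑ i, (f i)† :=
  map_sum (AddMonoidHom.mk' (·†) C.star_add) f Finset.univ

end Linear

section Interchange

variable {ρ σ τ ρ' σ' μ : C.Obj}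

theorem tHom_id_comp_tHom_id (f : C.Hom σ τ) (g : C.Hom ρ σ) :
    (f ⊗̂ 𝟙 μ) ⊚ (g ⊗̂ 𝟙 μ) = (f ⊚ g) ⊗̂ 𝟙 μ := by
  rw [C.interchange, C.comp_id]

theorem id_tHom_comp_id_tHom (f : C.Hom σ τ) (g : C.Hom ρ σ) :
    (𝟙 μ ⊗̂ f) ⊚ (𝟙 μ ⊗̂ g) = 𝟙 μ ⊗̂ (f ⊚ g) := by
  rw [C.interchange, C.comp_id]

theorem tHom_id_comp_id_tHom (f : C.Hom ρ ρ') (g : C.Hom σ σ') :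
    (f ⊗̂ 𝟙 σ') ⊚ (𝟙 ρ ⊗̂ g) = f ⊗̂ g := by
  rw [C.interchange, C.comp_id, C.id_comp]

theorem id_tHom_comp_tHom_id (f : C.Hom ρ ρ') (g : C.Hom σ σ') :
    (𝟙 ρ' ⊗̂ g) ⊚ (f ⊗̂ 𝟙 σ) = f ⊗̂ g := by
  rw [C.interchange, C.comp_id, C.id_comp]

theorem tHom_tHom_eq_castHom {ρ ρ' σ σ' τ τ' : C.Obj}
    (f : C.Hom ρ ρ') (g : C.Hom σ σ') (h : C.Hom τ τ') :
    (f ⊗̂ g) ⊗̂ h = castHom (C.tObj_assoc ρ σ τ) (C.tObj_assoc ρ' σ' τ') (f ⊗̂ g ⊗̂ h) :=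
  (heq_iff_castHom_eq.mp (C.tHom_assoc f g h)).symm

theorem id_unit_tHom_eq_castHom (f : C.Hom ρ σ) :
    𝟙 C.unit ⊗̂ f = castHom (C.unit_tObj ρ).symm (C.unit_tObj σ).symm f :=
  castHom_eq_iff.mp <|
    (heq_iff_castHom_eq (h := C.unit_tObj ρ) (k := C.unit_tObj σ)).mp (C.id_unit_tHom f)

theorem tHom_id_unit_eq_castHom (f : C.Hom ρ σ) :
    f ⊗̂ 𝟙 C.unit = castHom (C.tObj_unit ρ).symm (C.tObj_unit σ).symm f :=
  castHom_eq_iff.mp <|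
    (heq_iff_castHom_eq (h := C.tObj_unit ρ) (k := C.tObj_unit σ)).mp (C.tHom_id_unit f)

theorem eq_castHom_tHom_id_unit (f : C.Hom ρ σ) :
    f = castHom (C.tObj_unit ρ) (C.tObj_unit σ) (f ⊗̂ 𝟙 C.unit) := by
  rw [tHom_id_unit_eq_castHom, castHom_castHom, castHom_rfl]

theorem eq_castHom_id_unit_tHom (f : C.Hom ρ σ) :
    f = castHom (C.unit_tObj ρ) (C.unit_tObj σ) (𝟙 C.unit ⊗̂ f) := by
  rw [id_unit_tHom_eq_castHom, castHom_castHom, castHom_rfl]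

end Interchange

section CupsCaps

variable {m n ρ σ : C.Obj}

def cupRight (a : C.Hom C.unit m) (ρ : C.Obj) : C.Hom ρ (ρ ⊙ m) :=
  castHom (C.tObj_unit ρ) rfl (𝟙 ρ ⊗̂ a)

def cupLeft (a : C.Hom C.unit m) (ρ : C.Obj) : C.Hom ρ (m ⊙ ρ) :=
  castHom (C.unit_tObj ρ) rfl (a ⊗̂ 𝟙 ρ)

def capRight (a : C.Hom C.unit m) (ρ : C.Obj) : C.Hom (ρ ⊙ m) ρ :=
  castHom rfl (C.tObj_unit ρ) (𝟙 ρ ⊗̂ a†)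

def capLeft (a : C.Hom C.unit m) (ρ : C.Obj) : C.Hom (m ⊙ ρ) ρ :=
  castHom rfl (C.unit_tObj ρ) (a† ⊗̂ 𝟙 ρ)

theorem star_cupRight (a : C.Hom C.unit m) : (cupRight a ρ)† = capRight a ρ := by
  rw [cupRight, capRight, star_castHom, C.star_tHom, C.star_id]

theorem star_cupLeft (a : C.Hom C.unit m) : (cupLeft a ρ)† = capLeft a ρ := by
  rw [cupLeft, capLeft, star_castHom, C.star_tHom, C.star_id]

theorem star_capLeft (a : C.Hom C.unit m) : (capLeft a ρ)† = cupLeft a ρ := by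
  rw [← star_cupLeft, C.star_star]

theorem tHom_comp_cupRight (f : C.Hom ρ σ) (k : C.Hom m n) (a : C.Hom C.unit m) :
    (f ⊗̂ k) ⊚ cupRight a ρ = castHom (C.tObj_unit ρ) rfl (f ⊗̂ (k ⊚ a)) := by
  rw [cupRight, comp_castHom, C.interchange, C.comp_id]

theorem tHom_comp_cupLeft (f : C.Hom ρ σ) (k : C.Hom m n) (a : C.Hom C.unit m) :
    (k ⊗̂ f) ⊚ cupLeft a ρ = castHom (C.unit_tObj ρ) rfl ((k ⊚ a) ⊗̂ f) := by
  rw [cupLeft, comp_castHom, C.interchange, C.comp_id]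

theorem capRight_comp_tHom (f : C.Hom ρ σ) (k : C.Hom n m) (a : C.Hom C.unit m) :
    capRight a σ ⊚ (f ⊗̂ k) = castHom rfl (C.tObj_unit σ) (f ⊗̂ (a† ⊚ k)) := by
  rw [capRight, castHom_target_comp, C.interchange, C.id_comp]

theorem capLeft_comp_tHom (f : C.Hom ρ σ) (k : C.Hom n m) (a : C.Hom C.unit m) :
    capLeft a σ ⊚ (k ⊗̂ f) = castHom rfl (C.unit_tObj σ) ((a† ⊚ k) ⊗̂ f) := by
  rw [capLeft, castHom_target_comp, C.interchange, C.id_comp]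

theorem cupRight_naturality (a : C.Hom C.unit m) (f : C.Hom ρ σ) :
    (f ⊗̂ 𝟙 m) ⊚ cupRight a ρ = cupRight a σ ⊚ f := by
  conv_rhs => rw [eq_castHom_tHom_id_unit f, cupRight, castHom_comp_castHom, C.interchange]
  rw [tHom_comp_cupRight]
  simp only [C.id_comp, C.comp_id]

theorem cupLeft_naturality (a : C.Hom C.unit m) (f : C.Hom ρ σ) :
    (𝟙 m ⊗̂ f) ⊚ cupLeft a ρ = cupLeft a σ ⊚ f := by
  conv_rhs => rw [eq_castHom_id_unit_tHom f, cupLeft, castHom_comp_castHom, C.interchange]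
  rw [tHom_comp_cupLeft]
  simp only [C.id_comp, C.comp_id]

theorem capRight_naturality (a : C.Hom C.unit m) (f : C.Hom ρ σ) :
    capRight a σ ⊚ (f ⊗̂ 𝟙 m) = f ⊚ capRight a ρ := by
  conv_rhs => rw [eq_castHom_tHom_id_unit f, capRight, castHom_comp_castHom, C.interchange]
  rw [capRight_comp_tHom]
  simp only [C.id_comp, C.comp_id]

theorem capLeft_naturality (a : C.Hom C.unit m) (f : C.Hom ρ σ) :
    capLeft a σ ⊚ (𝟙 m ⊗̂ f) = f ⊚ capLeft a ρ := by
  conv_rhs => rw [eq_castHom_id_unit_tHom f, capLeft, castHom_comp_castHom, C.interchange]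
  rw [capLeft_comp_tHom]
  simp only [C.id_comp, C.comp_id]

theorem cupRight_comp (a : C.Hom C.unit m) (k : C.Hom m n) (ρ : C.Obj) :
    cupRight (k ⊚ a) ρ = (𝟙 ρ ⊗̂ k) ⊚ cupRight a ρ := by
  rw [tHom_comp_cupRight]; rfl

theorem cupLeft_comp (a : C.Hom C.unit m) (k : C.Hom m n) (ρ : C.Obj) :
    cupLeft (k ⊚ a) ρ = (k ⊗̂ 𝟙 ρ) ⊚ cupLeft a ρ := by
  rw [tHom_comp_cupLeft]; rfl

theorem capRight_comp (a : C.Hom C.unit m) (k : C.Hom m n) (ρ : C.Obj) :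
    capRight (k ⊚ a) ρ = capRight a ρ ⊚ (𝟙 ρ ⊗̂ k†) := by
  rw [capRight_comp_tHom, capRight, C.star_comp]

theorem capLeft_comp (a : C.Hom C.unit m) (k : C.Hom m n) (ρ : C.Obj) :
    capLeft (k ⊚ a) ρ = capLeft a ρ ⊚ (k† ⊗̂ 𝟙 ρ) := by
  rw [capLeft_comp_tHom, capLeft, C.star_comp]

theorem cupRight_comp_eq_castHom_tHom (a : C.Hom C.unit m) (b : C.Hom C.unit n) :
    cupRight b m ⊚ a = castHom (C.unit_tObj C.unit) rfl (a ⊗̂ b) := by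
  conv_lhs => rw [eq_castHom_tHom_id_unit a, cupRight, castHom_comp_castHom, C.interchange]
  simp only [C.comp_id, C.id_comp]

theorem cupLeft_comp_eq_castHom_tHom (a : C.Hom C.unit m) (b : C.Hom C.unit n) :
    cupLeft a n ⊚ b = castHom (C.unit_tObj C.unit) rfl (a ⊗̂ b) := by
  conv_lhs => rw [eq_castHom_id_unit_tHom b, cupLeft, castHom_comp_castHom, C.interchange]
  simp only [C.comp_id, C.id_comp]

theorem id_tHom_cupRight (a : C.Hom C.unit m) (x ρ : C.Obj) :
    𝟙 x ⊗̂ cupRight a ρ = castHom rfl (C.tObj_assoc x ρ m).symm (cupRight a (x ⊙ ρ)) := by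
  unfold cupRight
  rw [tHom_castHom_right (H := by rw [C.tObj_unit]) (K := rfl), ← C.tHom_id x ρ,
    tHom_tHom_eq_castHom, castHom_castHom, castHom_castHom]

theorem cupLeft_tHom_id (a : C.Hom C.unit m) (ρ x : C.Obj) :
    cupLeft a ρ ⊗̂ 𝟙 x = castHom rfl (C.tObj_assoc m ρ x) (cupLeft a (ρ ⊙ x)) := by
  unfold cupLeft
  rw [tHom_castHom_left (H := by rw [C.unit_tObj]) (K := rfl), ← C.tHom_id ρ x,
    tHom_tHom_eq_castHom, castHom_castHom, castHom_castHom]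

theorem castHom_capRight_tHom_id (b : C.Hom C.unit m) (x ν : C.Obj) :
    castHom (C.tObj_assoc x m ν).symm rfl (capRight b x ⊗̂ 𝟙 ν) = 𝟙 x ⊗̂ capLeft b ν := by
  apply eq_of_heq
  refine (castHom_heq _ _ _).trans ?_
  refine (heq_tHom rfl (by rw [C.tObj_unit]) rfl rfl (castHom_heq _ _ _) HEq.rfl).trans ?_
  refine (C.tHom_assoc (𝟙 x) b† (𝟙 ν)).symm.trans ?_
  exact heq_tHom rfl rfl rfl (by rw [C.unit_tObj]) HEq.rfl (castHom_heq _ _ _).symm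

end CupsCaps

section Snakes

variable {x ρ σ μ ν : C.Obj}

/-- `snakeR a b = (b† ⊗ 1_ν) ∘ (1_ρ ⊗ a)` and `snakeL a b = (1_μ ⊗ b†) ∘ (a ⊗ 1_σ)`, with the
unit and associativity identifications made explicit. -/
def snakeR (a : C.Hom C.unit (μ ⊙ ν)) (b : C.Hom C.unit (ρ ⊙ μ)) : C.Hom ρ ν :=
  capLeft b ν ⊚ castHom rfl (C.tObj_assoc ρ μ ν) (cupRight a ρ)

def snakeL (a : C.Hom C.unit (μ ⊙ ν)) (b : C.Hom C.unit (ν ⊙ σ)) : C.Hom σ μ :=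
  capRight b μ ⊚ castHom rfl (C.tObj_assoc μ ν σ).symm (cupLeft a σ)

theorem conjPair_iff {R : C.Hom C.unit (σ ⊙ ρ)} {Rb : C.Hom C.unit (ρ ⊙ σ)} :
    C.ConjPair ρ σ R Rb ↔ snakeR R Rb = 𝟙 ρ ∧ snakeR Rb R = 𝟙 σ := by
  unfold ConjPair snakeR capLeft cupRight
  rw [eqHom_eq_castHom, eqHom_eq_castHom, eqHom_eq_castHom, eqHom_eq_castHom, eqHom_eq_castHom,
    eqHom_eq_castHom, comp_castHom_id, comp_castHom_id, castHom_id_comp, castHom_id_comp,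
    castHom_id_comp, castHom_id_comp, castHom_castHom, castHom_castHom, castHom_target_comp,
    castHom_target_comp]

theorem star_snakeR (a : C.Hom C.unit (μ ⊙ ν)) (b : C.Hom C.unit (ρ ⊙ μ)) :
    (snakeR a b)† = snakeL b a := by
  rw [snakeR, snakeL, C.star_comp, star_castHom, star_cupRight, star_capLeft, castHom_comp]

theorem star_snakeL (a : C.Hom C.unit (μ ⊙ ν)) (b : C.Hom C.unit (ν ⊙ σ)) :
    (snakeL a b)† = snakeR b a := by
  rw [← star_snakeR, C.star_star]

theorem id_tHom_snakeR_comp (a : C.Hom C.unit (μ ⊙ ν)) (b : C.Hom C.unit (ρ ⊙ μ))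
    (c : C.Hom C.unit (x ⊙ ρ)) :
    (𝟙 x ⊗̂ snakeR a b) ⊚ c = (snakeL c b ⊗̂ 𝟙 ν) ⊚ a := by
  rw [snakeR, snakeL, ← id_tHom_comp_id_tHom, ← tHom_id_comp_tHom_id,
    tHom_castHom_right rfl (C.tObj_assoc ρ μ ν) rfl (congrArg (C.tObj x) (C.tObj_assoc ρ μ ν)),
    tHom_castHom_left rfl (C.tObj_assoc x ρ μ).symm rfl
      (congrArg (· ⊙ ν) (C.tObj_assoc x ρ μ).symm),
    id_tHom_cupRight, cupLeft_tHom_id, castHom_castHom, castHom_castHom, C.comp_assoc,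
    C.comp_assoc, castHom_target_comp, castHom_target_comp, cupRight_comp_eq_castHom_tHom,
    cupLeft_comp_eq_castHom_tHom, castHom_castHom, castHom_castHom,
    ← castHom_capRight_tHom_id b x ν, castHom_comp_castHom']
  conv_rhs => rw [comp_castHom']

theorem snakeL_tHom_id_comp (a : C.Hom C.unit (μ ⊙ ν)) (b : C.Hom C.unit (ν ⊙ σ))
    (c : C.Hom C.unit (σ ⊙ x)) :
    (snakeL a b ⊗̂ 𝟙 x) ⊚ c = (𝟙 μ ⊗̂ snakeR c b) ⊚ a :=
  (id_tHom_snakeR_comp c b a).symm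

end Snakes

section SnakeCalculus

variable {ρ σ μ ν ρ₀ σ₀ μ₀ ν₀ d₁ d₂ d₃ c₁ c₂ c₃ δ : C.Obj} {n : ℕ}

theorem tHom_tHom_comp_castHom_assoc (f₁ : C.Hom d₁ c₁) (f₂ : C.Hom d₂ c₂)
    (f₃ : C.Hom d₃ c₃) (X : C.Hom δ (d₁ ⊙ d₂ ⊙ d₃)) :
    ((f₁ ⊗̂ f₂) ⊗̂ f₃) ⊚ castHom rfl (C.tObj_assoc d₁ d₂ d₃) X
      = castHom rfl (C.tObj_assoc c₁ c₂ c₃) ((f₁ ⊗̂ f₂ ⊗̂ f₃) ⊚ X) := by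
  rw [tHom_tHom_eq_castHom, castHom_comp_castHom', castHom_rfl]

theorem tHom_tHom_comp_castHom_assoc_symm (f₁ : C.Hom d₁ c₁) (f₂ : C.Hom d₂ c₂)
    (f₃ : C.Hom d₃ c₃) (X : C.Hom δ ((d₁ ⊙ d₂) ⊙ d₃)) :
    (f₁ ⊗̂ f₂ ⊗̂ f₃) ⊚ castHom rfl (C.tObj_assoc d₁ d₂ d₃).symm X
      = castHom rfl (C.tObj_assoc c₁ c₂ c₃).symm (((f₁ ⊗̂ f₂) ⊗̂ f₃) ⊚ X) := by
  have h := tHom_tHom_comp_castHom_assoc f₁ f₂ f₃ (castHom rfl (C.tObj_assoc d₁ d₂ d₃).symm X)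
  rw [castHom_castHom, castHom_rfl] at h
  rw [h, castHom_castHom, castHom_rfl]

theorem snakeR_id_tHom_comp_cup (g : C.Hom ν₀ ν) (a : C.Hom C.unit (μ ⊙ ν₀))
    (b : C.Hom C.unit (ρ ⊙ μ)) : snakeR ((𝟙 μ ⊗̂ g) ⊚ a) b = g ⊚ snakeR a b := by
  rw [snakeR, snakeR, cupRight_comp, ← tHom_tHom_comp_castHom_assoc, C.tHom_id, ← C.comp_assoc,
    capLeft_naturality, C.comp_assoc]

theorem snakeR_tHom_id_comp_cup (f : C.Hom μ₀ μ) (a : C.Hom C.unit (μ₀ ⊙ ν))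
    (b : C.Hom C.unit (ρ ⊙ μ)) : snakeR ((f ⊗̂ 𝟙 ν) ⊚ a) b = snakeR a ((𝟙 ρ ⊗̂ f†) ⊚ b) := by
  rw [snakeR, snakeR, cupRight_comp, ← tHom_tHom_comp_castHom_assoc, ← C.comp_assoc,
    capLeft_comp, C.star_tHom, C.star_id, C.star_star]

theorem snakeL_tHom_id_comp_cup (f : C.Hom μ₀ μ) (a : C.Hom C.unit (μ₀ ⊙ ν))
    (b : C.Hom C.unit (ν ⊙ σ)) : snakeL ((f ⊗̂ 𝟙 ν) ⊚ a) b = f ⊚ snakeL a b := by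
  rw [snakeL, snakeL, cupLeft_comp, ← tHom_tHom_comp_castHom_assoc_symm, C.tHom_id,
    ← C.comp_assoc, capRight_naturality, C.comp_assoc]

theorem snakeL_id_tHom_comp_cup (g : C.Hom ν₀ ν) (a : C.Hom C.unit (μ ⊙ ν₀))
    (b : C.Hom C.unit (ν ⊙ σ)) : snakeL ((𝟙 μ ⊗̂ g) ⊚ a) b = snakeL a ((g† ⊗̂ 𝟙 σ) ⊚ b) := by
  rw [snakeL, snakeL, cupLeft_comp, ← tHom_tHom_comp_castHom_assoc_symm, ← C.comp_assoc,
    capRight_comp, C.star_tHom, C.star_star, C.star_id]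

theorem snakeR_comp (a : C.Hom C.unit (μ ⊙ ν)) (b : C.Hom C.unit (ρ ⊙ μ)) (f : C.Hom ρ₀ ρ) :
    snakeR a b ⊚ f = snakeR a ((f† ⊗̂ 𝟙 μ) ⊚ b) := by
  rw [snakeR, snakeR, C.comp_assoc, castHom_target_comp, ← cupRight_naturality, ← C.tHom_id μ ν,
    ← tHom_tHom_comp_castHom_assoc, ← C.comp_assoc, capLeft_comp, C.star_tHom, C.star_star,
    C.star_id]

theorem snakeL_comp (a : C.Hom C.unit (μ ⊙ ν)) (b : C.Hom C.unit (ν ⊙ σ)) (f : C.Hom σ₀ σ) :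
    snakeL a b ⊚ f = snakeL a ((𝟙 ν ⊗̂ f†) ⊚ b) := by
  rw [snakeL, snakeL, C.comp_assoc, castHom_target_comp, ← cupLeft_naturality, ← C.tHom_id μ ν,
    ← tHom_tHom_comp_castHom_assoc_symm, ← C.comp_assoc, capRight_comp, C.star_tHom,
    C.star_star, C.star_id]

theorem snakeR_zero_cup (b : C.Hom C.unit (ρ ⊙ μ)) :
    snakeR (0 : C.Hom C.unit (μ ⊙ ν)) b = 0 := by
  rw [snakeR, cupRight, tHom_zero, castHom_zero, castHom_zero, comp_zero]

theorem snakeR_zero_cap (a : C.Hom C.unit (μ ⊙ ν)) :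
    snakeR a (0 : C.Hom C.unit (ρ ⊙ μ)) = 0 := by
  rw [snakeR, capLeft, star_zero, zero_tHom, castHom_zero, zero_comp]

theorem snakeL_zero_cap (a : C.Hom C.unit (μ ⊙ ν)) :
    snakeL a (0 : C.Hom C.unit (ν ⊙ σ)) = 0 := by
  rw [snakeL, capRight, star_zero, tHom_zero, castHom_zero, zero_comp]

theorem snakeL_smul_cup (c : ℂ) (a : C.Hom C.unit (μ ⊙ ν)) (b : C.Hom C.unit (ν ⊙ σ)) :
    snakeL (c • a) b = c • snakeL a b := by
  rw [snakeL, snakeL, cupLeft, cupLeft, C.tHom_smul_left, castHom_smul, castHom_smul,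
    C.comp_smul_right]

theorem snakeR_smul_cap (c : ℂ) (a : C.Hom C.unit (μ ⊙ ν)) (b : C.Hom C.unit (ρ ⊙ μ)) :
    snakeR a (c • b) = starRingEnd ℂ c • snakeR a b := by
  rw [snakeR, snakeR, capLeft, capLeft, C.star_smul, C.tHom_smul_left, castHom_smul,
    C.comp_smul_left]

theorem snakeL_smul_cap (c : ℂ) (a : C.Hom C.unit (μ ⊙ ν)) (b : C.Hom C.unit (ν ⊙ σ)) :
    snakeL a (c • b) = starRingEnd ℂ c • snakeL a b := by
  rw [snakeL, snakeL, capRight, capRight, C.star_smul, C.tHom_smul_right, castHom_smul,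
    C.comp_smul_left]

theorem snakeR_sum_cup (a : Fin n → C.Hom C.unit (μ ⊙ ν)) (b : C.Hom C.unit (ρ ⊙ μ)) :
    snakeR (∑ i, a i) b = ∑ i, snakeR (a i) b := by
  simp only [snakeR, cupRight, tHom_sum, castHom_sum, comp_sum]

theorem snakeL_sum_cup (a : Fin n → C.Hom C.unit (μ ⊙ ν)) (b : C.Hom C.unit (ν ⊙ σ)) :
    snakeL (∑ i, a i) b = ∑ i, snakeL (a i) b := by
  simp only [snakeL, cupLeft, sum_tHom, castHom_sum, comp_sum]

theorem snakeR_sum_cap (a : C.Hom C.unit (μ ⊙ ν)) (b : Fin n → C.Hom C.unit (ρ ⊙ μ)) :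
    snakeR a (∑ i, b i) = ∑ i, snakeR a (b i) := by
  simp only [snakeR, capLeft, star_sum, sum_tHom, castHom_sum, sum_comp]

theorem snakeL_sum_cap (a : C.Hom C.unit (μ ⊙ ν)) (b : Fin n → C.Hom C.unit (ν ⊙ σ)) :
    snakeL a (∑ i, b i) = ∑ i, snakeL a (b i) := by
  simp only [snakeL, capRight, star_sum, tHom_sum, castHom_sum, sum_comp]

end SnakeCalculus

def Endo (C : StrictCTC) (ρ : C.Obj) : Type := C.Hom ρ ρ

namespace Endo

variable {ρ : C.Obj}

instance : NormedAddCommGroup (Endo C ρ) := C.normed ρ ρ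
instance : NormedSpace ℂ (Endo C ρ) := C.normedSpace ρ ρ
instance : CompleteSpace (Endo C ρ) := C.complete ρ ρ

instance : Ring (Endo C ρ) :=
  { (inferInstance : AddCommGroup (C.Hom ρ ρ)) with
    mul := C.comp
    one := 𝟙 ρ
    mul_assoc := C.comp_assoc
    one_mul := C.id_comp
    mul_one := C.comp_id
    left_distrib := C.comp_add_right
    right_distrib := C.comp_add_left
    zero_mul := zero_comp
    mul_zero := comp_zero }

theorem mul_def (a b : Endo C ρ) : a * b = a ⊚ b := rfl

instance : StarRing (Endo C ρ) where
  star := C.star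
  star_involutive := C.star_star
  star_mul := C.star_comp
  star_add := C.star_add

instance : Algebra ℂ (Endo C ρ) := Algebra.ofModule C.comp_smul_left C.comp_smul_right

instance : StarModule ℂ (Endo C ρ) := ⟨C.star_smul⟩

instance : NormedRing (Endo C ρ) :=
  { (inferInstance : NormedAddCommGroup (C.Hom ρ ρ)), (inferInstance : Ring (Endo C ρ)) with
    norm_mul_le := C.norm_comp_le }

instance : NormedAlgebra ℂ (Endo C ρ) :=
  { (inferInstance : Algebra ℂ (Endo C ρ)) with
    norm_smul_le := norm_smul_le }

instance : CStarRing (Endo C ρ) where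
  norm_mul_self_le a := by
    rw [← pow_two]
    exact (C.cstar_norm a).ge

instance : CStarAlgebra (Endo C ρ) := {}

end Endo

def HasCommonSuperobject (C : StrictCTC) : Prop :=
  ∀ ρ σ : C.Obj, ∃ τ, C.Subobject ρ τ ∧ C.Subobject σ τ

theorem _root_.IsRegularCTC.hasCommonSuperobject (hreg : IsRegularCTC C) :
    C.HasCommonSuperobject := fun ρ σ =>
  let ⟨τ, V, W, hV, hW, _⟩ := hreg.hasSums ρ σ
  ⟨τ, ⟨V, hV⟩, ⟨W, hW⟩⟩

section Positivity

variable {ρ σ : C.Obj}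

theorem eq_zero_of_star_comp_self_eq_zero {f : C.Hom ρ σ} (h : f† ⊚ f = 0) : f = 0 := by
  have hf := C.cstar_norm f
  rw [h, norm_zero, eq_comm, sq_eq_zero_iff, norm_eq_zero] at hf
  exact hf

theorem conj_eq_of_star_comp_self_eq_smul {f : C.Hom ρ σ} {c : ℂ} (h : f† ⊚ f = c • 𝟙 ρ) :
    starRingEnd ℂ c = c := by
  have hsa : (f† ⊚ f)† = f† ⊚ f := by rw [C.star_comp, C.star_star]
  rw [h, C.star_smul, C.star_id] at hsa
  exact smul_left_injective ℂ (C.id_ne_zero ρ) hsa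

/-- `f† ∘ f` becomes an element `x† x` of a single `C*`-algebra, with `x = Q ∘ f ∘ P†`, only after
`ρ` and `σ` are embedded in a common object `τ` by isometries `P` and `Q`. -/
theorem exists_nonneg_of_star_comp_self_eq_smul (hsub : C.HasCommonSuperobject)
    {f : C.Hom ρ σ} {c : ℂ} (h : f† ⊚ f = c • 𝟙 ρ) : ∃ r : ℝ, 0 ≤ r ∧ c = r := by
  have hc : c = (c.re : ℂ) :=
    (Complex.conj_eq_iff_re.mp (conj_eq_of_star_comp_self_eq_smul h)).symm
  refine ⟨c.re, ?_, hc⟩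
  obtain ⟨τ, ⟨P, hP⟩, ⟨Q, hQ⟩⟩ := hsub ρ σ
  let x : Endo C τ := Q ⊚ f ⊚ P†
  let p : Endo C τ := P ⊚ P†
  have hpp : p * p = p := by
    rw [Endo.mul_def, C.comp_assoc, ← C.comp_assoc P†, hP, C.id_comp]
  have hp0 : p ≠ 0 := by
    intro h0
    have hid : P† ⊚ ((P ⊚ P†) ⊚ P) = 𝟙 ρ := by rw [C.comp_assoc, hP, C.comp_id, hP]
    rw [show P ⊚ P† = 0 from h0, zero_comp, comp_zero] at hid
    exact C.id_ne_zero ρ hid.symm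
  have hxx : Star.star x * x = (c.re : ℂ) • p := by
    change (Q ⊚ f ⊚ P†)† ⊚ (Q ⊚ f ⊚ P†) = (c.re : ℂ) • (P ⊚ P†)
    rw [C.star_comp, C.star_comp, C.star_star, C.comp_assoc, ← C.comp_assoc Q† Q, hQ, C.id_comp,
      C.comp_assoc P, ← C.comp_assoc f†, h, C.comp_smul_left, C.id_comp, C.comp_smul_right, ← hc]
  have hmem : c.re ∈ spectrum ℝ (Star.star x * x) := by
    rw [spectrum.mem_iff, Algebra.algebraMap_eq_smul_one, ← Complex.coe_smul, hxx]
    intro hu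
    refine hp0 ((hu.mul_left_eq_zero).mp ?_)
    rw [mul_sub, mul_smul_comm, mul_smul_comm, mul_one, hpp, sub_self]
  exact spectrum_star_mul_self_nonneg _ hmem

end Positivity

section Unitaries

variable {ρ σ τ : C.Obj}

theorem IsUnitary.star {u : C.Hom σ τ} (hu : C.IsUnitary u) : C.IsUnitary u† := by
  rw [IsUnitary, C.star_star]
  exact hu.symm

theorem isUnitary_id (ρ : C.Obj) : C.IsUnitary (𝟙 ρ) := by
  simp only [IsUnitary, C.star_id, C.comp_id, and_self]

theorem Irreducible.of_isUnitary {w : C.Hom σ τ} (hw : C.IsUnitary w) (hτ : C.Irreducible τ) :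
    C.Irreducible σ := by
  intro f
  obtain ⟨c, hc⟩ := hτ (w ⊚ f ⊚ w†)
  refine ⟨c, ?_⟩
  calc f = w† ⊚ (w ⊚ f ⊚ w†) ⊚ w := by
        rw [C.comp_assoc, C.comp_assoc, hw.1, C.comp_id, ← C.comp_assoc, hw.1, C.id_comp]
    _ = c • 𝟙 σ := by rw [hc, C.comp_smul_left, C.id_comp, C.comp_smul_right, hw.1]

theorem isUnitary_of_isIsometry_of_irreducible {w : C.Hom σ τ} (hw : C.IsIsometry w)
    (hτ : C.Irreducible τ) : C.IsUnitary w := by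
  obtain ⟨d, hd⟩ := hτ (w ⊚ w†)
  have hw0 : w ≠ 0 := fun h0 => C.id_ne_zero σ (by rw [← hw, h0, comp_zero])
  have hdw : (1 : ℂ) • w = d • w := by
    conv_lhs => rw [one_smul, ← C.comp_id w, ← hw, ← C.comp_assoc, hd, C.comp_smul_left,
      C.id_comp]
  have hd1 : d = 1 := (smul_left_injective ℂ hw0 hdw).symm
  exact ⟨hw, by rw [hd, hd1, one_smul]⟩

theorem exists_isUnitary_smul_eq (hsub : C.HasCommonSuperobject) (hσ : C.Irreducible σ)
    (hτ : C.Irreducible τ) {u : C.Hom σ τ} (hu : u ≠ 0) :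
    ∃ (r : ℝ) (w : C.Hom σ τ), C.IsUnitary w ∧ u = (r : ℂ) • w := by
  obtain ⟨c, hc⟩ := hσ (u† ⊚ u)
  obtain ⟨r, hr, rfl⟩ := exists_nonneg_of_star_comp_self_eq_smul hsub hc
  have hr0 : r ≠ 0 := by
    rintro rfl
    rw [Complex.ofReal_zero, zero_smul] at hc
    exact hu (eq_zero_of_star_comp_self_eq_zero hc)
  have hs : (Real.sqrt r : ℂ) ≠ 0 := by
    simpa using Real.sqrt_pos.mpr (lt_of_le_of_ne hr (Ne.symm hr0)) |>.ne'
  refine ⟨Real.sqrt r, (Real.sqrt r : ℂ)⁻¹ • u, isUnitary_of_isIsometry_of_irreducible ?_ hτ, ?_⟩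
  · have hsq : (Real.sqrt r : ℂ)⁻¹ * (Real.sqrt r : ℂ)⁻¹ * r = 1 := by
      rw [← mul_inv, ← Complex.ofReal_mul, Real.mul_self_sqrt hr, inv_mul_cancel₀]
      exact_mod_cast hr0
    rw [IsIsometry, C.star_smul, C.comp_smul_left, C.comp_smul_right, hc, smul_smul, smul_smul,
      map_inv₀, Complex.conj_ofReal, hsq, one_smul]
  · rw [smul_smul, mul_inv_cancel₀ hs, one_smul]

end Unitaries

section Conjugates

variable {ρ σ σb₁ σb₂ : C.Obj}

theorem snakeL_eq_id_of_snakeR_eq_id {R : C.Hom C.unit (σ ⊙ ρ)} {Rb : C.Hom C.unit (ρ ⊙ σ)}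
    (h : snakeR R Rb = 𝟙 ρ) : snakeL Rb R = 𝟙 ρ := by
  rw [← star_snakeR, h, C.star_id]

theorem ne_zero_of_snakeR_eq_id {R : C.Hom C.unit (σ ⊙ ρ)} {Rb : C.Hom C.unit (ρ ⊙ σ)}
    (h : snakeR R Rb = 𝟙 ρ) : R ≠ 0 := by
  rintro rfl
  exact C.id_ne_zero ρ (by rw [← h, snakeR_zero_cup])

theorem irreducible_of_snakeR_eq_id {R : C.Hom C.unit (σ ⊙ ρ)} {Rb : C.Hom C.unit (ρ ⊙ σ)}
    (hRb : snakeR Rb R = 𝟙 σ) (hρ : C.Irreducible ρ) : C.Irreducible σ := by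
  intro x
  obtain ⟨d, hd⟩ := hρ (snakeR ((x ⊗̂ 𝟙 ρ) ⊚ R) Rb)
  have hRR : snakeL R Rb = 𝟙 σ := snakeL_eq_id_of_snakeR_eq_id hRb
  have hxR : (x ⊗̂ 𝟙 ρ) ⊚ R = d • R :=
    calc (x ⊗̂ 𝟙 ρ) ⊚ R = (𝟙 σ ⊗̂ snakeR ((x ⊗̂ 𝟙 ρ) ⊚ R) Rb) ⊚ R := by
          rw [id_tHom_snakeR_comp, hRR, C.tHom_id, C.id_comp]
      _ = d • R := by rw [hd, C.tHom_smul_right, C.tHom_id, C.comp_smul_left, C.id_comp]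
  refine ⟨d, ?_⟩
  calc x = snakeL ((x ⊗̂ 𝟙 ρ) ⊚ R) Rb := by rw [snakeL_tHom_id_comp_cup, hRR, C.comp_id]
    _ = d • 𝟙 σ := by rw [hxR, snakeL_smul_cup, hRR]

variable {R₁ : C.Hom C.unit (σb₁ ⊙ σ)} {Rb₁ : C.Hom C.unit (σ ⊙ σb₁)}
  {R₂ : C.Hom C.unit (σb₂ ⊙ σ)} {Rb₂ : C.Hom C.unit (σ ⊙ σb₂)}

theorem snakeL_tHom_id_comp_of_snakeR_eq_id (h₁ : snakeR R₁ Rb₁ = 𝟙 σ) :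
    (snakeL R₂ Rb₁ ⊗̂ 𝟙 σ) ⊚ R₁ = R₂ := by
  rw [snakeL_tHom_id_comp, h₁, C.tHom_id, C.id_comp]

theorem id_tHom_snakeR_comp_of_snakeR_eq_id (h₂ : snakeR R₂ Rb₂ = 𝟙 σ) :
    (𝟙 σ ⊗̂ snakeR Rb₁ R₂) ⊚ Rb₂ = Rb₁ := by
  rw [id_tHom_snakeR_comp, snakeL_eq_id_of_snakeR_eq_id h₂, C.tHom_id, C.id_comp]

theorem snakeL_comp_snakeL (h₂ : snakeR R₂ Rb₂ = 𝟙 σ) (h₁ : snakeR Rb₁ R₁ = 𝟙 σb₁) :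
    snakeL R₁ Rb₂ ⊚ snakeL R₂ Rb₁ = 𝟙 σb₁ := by
  rw [snakeL_comp, star_snakeL, id_tHom_snakeR_comp, snakeL_eq_id_of_snakeR_eq_id h₂, C.tHom_id,
    C.id_comp, snakeL_eq_id_of_snakeR_eq_id h₁]

theorem isUnitary_snakeL_iff (h₁ : C.ConjPair σ σb₁ R₁ Rb₁) (h₂ : C.ConjPair σ σb₂ R₂ Rb₂) :
    C.IsUnitary (snakeL R₂ Rb₁) ↔ snakeR Rb₁ R₂ = snakeL R₁ Rb₂ := by
  rw [conjPair_iff] at h₁ h₂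
  have hVU := snakeL_comp_snakeL h₂.1 h₁.2
  have hUV := snakeL_comp_snakeL h₁.1 h₂.2
  rw [IsUnitary, star_snakeL]
  constructor
  · rintro ⟨hUU, -⟩
    rw [← C.comp_id (snakeR Rb₁ R₂), ← hUV, ← C.comp_assoc, hUU, C.id_comp]
  · intro h
    rw [h]
    exact ⟨hVU, hUV⟩

end Conjugates

section TransportOfPairs

variable {ρ ρb ρ' ρb' μ μ' ν ν' δ δ' γ : C.Obj}

theorem snakeR_tHom_comp_tHom_comp (v : C.Hom μ μ') (u : C.Hom ν ν') (f : C.Hom δ δ')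
    (g : C.Hom γ μ') (a : C.Hom C.unit (μ ⊙ ν)) (b : C.Hom C.unit (δ ⊙ γ)) :
    snakeR ((v ⊗̂ u) ⊚ a) ((f ⊗̂ g) ⊚ b) = u ⊚ snakeR a ((𝟙 δ ⊗̂ (v† ⊚ g)) ⊚ b) ⊚ f† := by
  calc snakeR ((v ⊗̂ u) ⊚ a) ((f ⊗̂ g) ⊚ b)
      = snakeR ((𝟙 μ' ⊗̂ u) ⊚ (v ⊗̂ 𝟙 ν) ⊚ a) ((f ⊗̂ g) ⊚ b) := by
        rw [← C.comp_assoc, id_tHom_comp_tHom_id]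
    _ = u ⊚ snakeR a ((𝟙 δ' ⊗̂ v†) ⊚ (f ⊗̂ g) ⊚ b) := by
        rw [snakeR_id_tHom_comp_cup, snakeR_tHom_id_comp_cup]
    _ = u ⊚ snakeR a ((f ⊗̂ 𝟙 μ) ⊚ (𝟙 δ ⊗̂ (v† ⊚ g)) ⊚ b) := by
        rw [← C.comp_assoc, ← C.comp_assoc, C.interchange, C.interchange]
        simp only [C.id_comp, C.comp_id]
    _ = u ⊚ snakeR a ((𝟙 δ ⊗̂ (v† ⊚ g)) ⊚ b) ⊚ f† := by
        rw [snakeR_comp, C.star_star]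

theorem snakeL_tHom_comp_tHom_comp (u : C.Hom μ μ') (v : C.Hom ν ν') (g : C.Hom γ ν')
    (f : C.Hom δ δ') (a : C.Hom C.unit (μ ⊙ ν)) (b : C.Hom C.unit (γ ⊙ δ)) :
    snakeL ((u ⊗̂ v) ⊚ a) ((g ⊗̂ f) ⊚ b) = u ⊚ snakeL a (((v† ⊚ g) ⊗̂ 𝟙 δ) ⊚ b) ⊚ f† := by
  rw [← star_snakeR, snakeR_tHom_comp_tHom_comp, C.star_comp, C.star_comp, C.star_star,
    star_snakeR, snakeL_id_tHom_comp_cup, C.star_comp, C.star_star, C.comp_assoc]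

theorem conjPair_tHom_comp {R : C.Hom C.unit (ρb ⊙ ρ)} {Rb : C.Hom C.unit (ρ ⊙ ρb)}
    (h : C.ConjPair ρ ρb R Rb) {u : C.Hom ρ ρ'} {v : C.Hom ρb ρb'} (hu : C.IsUnitary u)
    (hv : C.IsUnitary v) : C.ConjPair ρ' ρb' ((v ⊗̂ u) ⊚ R) ((u ⊗̂ v) ⊚ Rb) := by
  rw [conjPair_iff] at h ⊢
  rw [snakeR_tHom_comp_tHom_comp, snakeR_tHom_comp_tHom_comp, hu.1, hv.1, C.tHom_id, C.tHom_id,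
    C.id_comp, C.id_comp, h.1, h.2, C.id_comp, C.id_comp]
  exact ⟨hu.2, hv.2⟩

theorem star_comp_self_tHom_comp {u : C.Hom ρ ρ'} {v : C.Hom ρb ρb'} (hu : C.IsIsometry u)
    (hv : C.IsIsometry v) (R : C.Hom C.unit (ρb ⊙ ρ)) :
    ((v ⊗̂ u) ⊚ R)† ⊚ (v ⊗̂ u) ⊚ R = R† ⊚ R := by
  rw [C.star_comp, C.star_tHom, C.comp_assoc, ← C.comp_assoc (v† ⊗̂ u†), C.interchange, hu, hv,
    C.tHom_id, C.id_comp]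

theorem IsStandardPairIrr.tHom_comp {R : C.Hom C.unit (ρb ⊙ ρ)} {Rb : C.Hom C.unit (ρ ⊙ ρb)}
    (h : C.IsStandardPairIrr ρ ρb R Rb) {u : C.Hom ρ ρ'} {v : C.Hom ρb ρb'}
    (hu : C.IsUnitary u) (hv : C.IsUnitary v) :
    C.IsStandardPairIrr ρ' ρb' ((v ⊗̂ u) ⊚ R) ((u ⊗̂ v) ⊚ Rb) := by
  obtain ⟨hirr, hconj, hstd⟩ := h
  refine ⟨hirr.of_isUnitary hu.star, conjPair_tHom_comp hconj hu hv, ?_⟩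
  rw [star_comp_self_tHom_comp hu.1 hv.1, star_comp_self_tHom_comp hv.1 hu.1, hstd]

theorem IsIsometry.comp {σ τ : C.Obj} {u : C.Hom σ τ} {W : C.Hom ρ σ} (hu : C.IsIsometry u)
    (hW : C.IsIsometry W) : C.IsIsometry (u ⊚ W) := by
  rw [IsIsometry, C.star_comp, C.comp_assoc, ← C.comp_assoc u†, hu, C.id_comp, hW]

theorem sum_comp_star_eq_id_of_isUnitary {n : ℕ} {σ : Fin n → C.Obj} {W : ∀ i, C.Hom (σ i) ρ}
    (hW : ∑ i, W i ⊚ (W i)† = 𝟙 ρ) {u : C.Hom ρ ρ'} (hu : C.IsUnitary u) :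
    ∑ i, (u ⊚ W i) ⊚ (u ⊚ W i)† = 𝟙 ρ' := by
  have hterm : ∀ i, (u ⊚ W i) ⊚ (u ⊚ W i)† = u ⊚ (W i ⊚ (W i)†) ⊚ u† := fun i => by
    rw [C.star_comp, C.comp_assoc, C.comp_assoc]
  simp_rw [hterm]
  rw [← comp_sum, ← sum_comp, hW, C.id_comp, hu.2]

theorem tHom_comp_sum_tHom_comp {n : ℕ} {σ σb : Fin n → C.Obj} (u : C.Hom ρ ρ')
    (v : C.Hom ρb ρb') (W : ∀ i, C.Hom (σ i) ρ) (Wb : ∀ i, C.Hom (σb i) ρb)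
    (R : ∀ i, C.Hom C.unit (σb i ⊙ σ i)) :
    (v ⊗̂ u) ⊚ ∑ i, (Wb i ⊗̂ W i) ⊚ R i = ∑ i, ((v ⊚ Wb i) ⊗̂ (u ⊚ W i)) ⊚ R i := by
  simp only [comp_sum, ← C.comp_assoc, C.interchange]

theorem IsStandardPair.tHom_comp {R : C.Hom C.unit (ρb ⊙ ρ)} {Rb : C.Hom C.unit (ρ ⊙ ρb)}
    (h : C.IsStandardPair ρ ρb R Rb) {u : C.Hom ρ ρ'} {v : C.Hom ρb ρb'}
    (hu : C.IsUnitary u) (hv : C.IsUnitary v) :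
    C.IsStandardPair ρ' ρb' ((v ⊗̂ u) ⊚ R) ((u ⊗̂ v) ⊚ Rb) := by
  obtain ⟨hconj, n, σ, σb, W, Wb, Ri, Rbi, hW, hWb, hWsum, hWbsum, hstd, rfl, rfl⟩ := h
  exact ⟨conjPair_tHom_comp hconj hu hv, n, σ, σb, (u ⊚ W ·), (v ⊚ Wb ·), Ri, Rbi,
    fun i => IsIsometry.comp hu.1 (hW i), fun i => IsIsometry.comp hv.1 (hWb i),
    sum_comp_star_eq_id_of_isUnitary hWsum hu, sum_comp_star_eq_id_of_isUnitary hWbsum hv, hstd,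
    tHom_comp_sum_tHom_comp u v W Wb Ri, tHom_comp_sum_tHom_comp v u Wb W Rbi⟩

end TransportOfPairs

section IrreducibleStandard

variable {σ σb₁ σb₂ : C.Obj}

theorem star_comp_self_tHom_id_comp {ρ : C.Obj} {U : C.Hom σb₁ σb₂} {c : ℂ}
    (hU : U† ⊚ U = c • 𝟙 σb₁) (R : C.Hom C.unit (σb₁ ⊙ ρ)) :
    ((U ⊗̂ 𝟙 ρ) ⊚ R)† ⊚ (U ⊗̂ 𝟙 ρ) ⊚ R = c • (R† ⊚ R) := by
  rw [C.star_comp, C.star_tHom, C.star_id, C.comp_assoc, ← C.comp_assoc (U† ⊗̂ 𝟙 ρ),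
    tHom_id_comp_tHom_id, hU, C.tHom_smul_left, C.tHom_id, C.comp_smul_left, C.id_comp,
    C.comp_smul_right]

theorem star_comp_self_id_tHom_comp {ρ : C.Obj} {U : C.Hom σb₁ σb₂} {c : ℂ}
    (hU : U† ⊚ U = c • 𝟙 σb₁) (R : C.Hom C.unit (ρ ⊙ σb₁)) :
    ((𝟙 ρ ⊗̂ U) ⊚ R)† ⊚ (𝟙 ρ ⊗̂ U) ⊚ R = c • (R† ⊚ R) := by
  rw [C.star_comp, C.star_tHom, C.star_id, C.comp_assoc, ← C.comp_assoc (𝟙 ρ ⊗̂ U†),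
    id_tHom_comp_id_tHom, hU, C.tHom_smul_right, C.tHom_id, C.comp_smul_left, C.id_comp,
    C.comp_smul_right]

variable {R₁ : C.Hom C.unit (σb₁ ⊙ σ)} {Rb₁ : C.Hom C.unit (σ ⊙ σb₁)}
  {R₂ : C.Hom C.unit (σb₂ ⊙ σ)} {Rb₂ : C.Hom C.unit (σ ⊙ σb₂)}

/-- For `U = snakeL R₂ R̄₁`, irreducibility gives `U† U = U U† = μ`, and passing from `(R₁, R̄₁)`
to `(R₂, R̄₂)` multiplies `R† R` by `μ` and `R̄† R̄` by `μ⁻¹`; standardness of both pairs forces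
`μ² = 1`, and positivity `μ = 1`. -/
theorem isUnitary_snakeL_of_isStandardPairIrr (hsub : C.HasCommonSuperobject)
    (h₁ : C.IsStandardPairIrr σ σb₁ R₁ Rb₁) (h₂ : C.IsStandardPairIrr σ σb₂ R₂ Rb₂) :
    C.IsUnitary (snakeL R₂ Rb₁) := by
  obtain ⟨hσ, hc₁, hst₁⟩ := h₁
  obtain ⟨-, hc₂, hst₂⟩ := h₂
  rw [conjPair_iff] at hc₁ hc₂
  set U := snakeL R₂ Rb₁
  obtain ⟨μ, hμ⟩ := irreducible_of_snakeR_eq_id hc₁.2 hσ (U† ⊚ U)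
  have hμ' : U ⊚ U† = μ • 𝟙 σb₂ := by
    rw [← C.comp_id (U ⊚ U†), ← snakeL_comp_snakeL hc₁.1 hc₂.2, C.comp_assoc, ← C.comp_assoc U†,
      hμ, C.comp_smul_left, C.id_comp, C.comp_smul_right, snakeL_comp_snakeL hc₁.1 hc₂.2]
  obtain ⟨r, hr, rfl⟩ := exists_nonneg_of_star_comp_self_eq_smul hsub hμ
  have hR : R₂† ⊚ R₂ = (r : ℂ) • (R₁† ⊚ R₁) := by
    rw [← star_comp_self_tHom_id_comp hμ, snakeL_tHom_id_comp_of_snakeR_eq_id hc₁.1]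
  have hRb : Rb₁† ⊚ Rb₁ = (r : ℂ) • (Rb₂† ⊚ Rb₂) := by
    rw [← star_comp_self_id_tHom_comp (U := U†) (by rw [C.star_star, hμ']),
      show U† = snakeR Rb₁ R₂ from star_snakeL _ _, id_tHom_snakeR_comp_of_snakeR_eq_id hc₂.1]
  have hR₁ : R₁† ⊚ R₁ ≠ 0 := fun h0 =>
    ne_zero_of_snakeR_eq_id hc₁.1 (eq_zero_of_star_comp_self_eq_zero h0)
  have hrr : ((r * r : ℝ) : ℂ) • (R₁† ⊚ R₁) = (1 : ℂ) • (R₁† ⊚ R₁) := by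
    rw [one_smul, Complex.ofReal_mul, ← smul_smul, ← hR, hst₂, ← hRb, hst₁]
  have hr1 : r = 1 := by
    have h := smul_left_injective ℂ hR₁ hrr
    norm_cast at h
    nlinarith
  rw [hr1, Complex.ofReal_one, one_smul] at hμ hμ'
  exact ⟨hμ, hμ'⟩

theorem snakeR_eq_snakeL_of_isStandardPairIrr (hsub : C.HasCommonSuperobject)
    (h₁ : C.IsStandardPairIrr σ σb₁ R₁ Rb₁) (h₂ : C.IsStandardPairIrr σ σb₂ R₂ Rb₂) :
    snakeR Rb₁ R₂ = snakeL R₁ Rb₂ :=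
  (isUnitary_snakeL_iff h₁.2.1 h₂.2.1).mp (isUnitary_snakeL_of_isStandardPairIrr hsub h₁ h₂)

end IrreducibleStandard

section StandardPairs

variable {ρ ρb ρt : C.Obj}

/-- Both sides are conjugate-linear in `u`, and for `u` unitary they compare `(R_σ, R̄_σ)` with
the standard pair `((1 ⊗ u) ∘ R_τ, (u ⊗ 1) ∘ R̄_τ)` for `σ`. -/
theorem snakeR_id_tHom_comp_eq_snakeL_tHom_id_comp (hsub : C.HasCommonSuperobject)
    {σ σb τ τb : C.Obj} {Rσ : C.Hom C.unit (σb ⊙ σ)} {Rbσ : C.Hom C.unit (σ ⊙ σb)}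
    {Rτ : C.Hom C.unit (τb ⊙ τ)} {Rbτ : C.Hom C.unit (τ ⊙ τb)}
    (hσ : C.IsStandardPairIrr σ σb Rσ Rbσ) (hτ : C.IsStandardPairIrr τ τb Rτ Rbτ)
    (u : C.Hom τ σ) :
    snakeR Rbσ ((𝟙 τb ⊗̂ u) ⊚ Rτ) = snakeL Rσ ((u ⊗̂ 𝟙 τb) ⊚ Rbτ) := by
  by_cases hu : u = 0
  · rw [hu, tHom_zero, zero_comp, snakeR_zero_cap, zero_tHom, zero_comp, snakeL_zero_cap]
  obtain ⟨r, w, hw, rfl⟩ := exists_isUnitary_smul_eq hsub hτ.1 hσ.1 hu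
  rw [C.tHom_smul_right, C.tHom_smul_left, C.comp_smul_left, C.comp_smul_left, snakeR_smul_cap,
    snakeL_smul_cap,
    snakeR_eq_snakeL_of_isStandardPairIrr hsub hσ (hτ.tHom_comp hw (isUnitary_id τb))]

theorem snakeR_eq_snakeL_of_isStandardPair (hsub : C.HasCommonSuperobject)
    {R : C.Hom C.unit (ρb ⊙ ρ)} {Rb : C.Hom C.unit (ρ ⊙ ρb)}
    {T : C.Hom C.unit (ρt ⊙ ρ)} {Tb : C.Hom C.unit (ρ ⊙ ρt)}
    (hR : C.IsStandardPair ρ ρb R Rb) (hT : C.IsStandardPair ρ ρt T Tb) :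
    snakeR Rb T = snakeL R Tb := by
  obtain ⟨-, n, σ, σb, W, Wb, Ri, Rbi, -, -, -, -, hRi, rfl, rfl⟩ := hR
  obtain ⟨-, m, τ, τb, V, Vb, Ti, Tbi, -, -, -, -, hTi, rfl, rfl⟩ := hT
  simp only [snakeR_sum_cup, snakeR_sum_cap, snakeL_sum_cup, snakeL_sum_cap,
    snakeR_tHom_comp_tHom_comp, snakeL_tHom_comp_tHom_comp,
    snakeR_id_tHom_comp_eq_snakeL_tHom_id_comp hsub (hRi _) (hTi _)]

end StandardPairs

end StrictCTC

theorem standard_pair_characterization_general (C : StrictCTC) (hreg : IsRegularCTC C)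
    (ρ ρb : C.Obj) (R : C.Hom C.unit (C.tObj ρb ρ)) (Rb : C.Hom C.unit (C.tObj ρ ρb))
    (hstd : C.IsStandardPair ρ ρb R Rb)
    (ρt : C.Obj)
    (T : C.Hom C.unit (C.tObj ρt ρ)) :
    (∃ Tb : C.Hom C.unit (C.tObj ρ ρt), C.IsStandardPair ρ ρt T Tb) ↔
    (∃ U : C.Hom ρb ρt, C.IsUnitary U ∧ C.comp (C.tHom U (C.id ρ)) R = T) := by
  constructor
  · rintro ⟨Tb, hT⟩
    refine ⟨snakeL T Rb, ?_, snakeL_tHom_id_comp_of_snakeR_eq_id (conjPair_iff.mp hstd.1).1⟩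
    exact (isUnitary_snakeL_iff hstd.1 hT.1).mpr
      (snakeR_eq_snakeL_of_isStandardPair hreg.hasCommonSuperobject hstd hT)
  · rintro ⟨U, hU, rfl⟩
    exact ⟨_, hstd.tHom_comp (isUnitary_id ρ) hU⟩

/-- Lemma 1.14.  Let `ρ` be an object of a regular
`C*`-tensor category with conjugate `ρ̄` and standard pair of conjugation
operators `(R, R̄)`.  Let `ρ̃` be any conjugate of `ρ` and `T ∈ (ι, ρ̃ρ)`.
Then there exists `T̄ ∈ (ι, ρρ̃)` such that `(T, T̄)` is a standard pair of
conjugation operators if and only if there is a unitary `U ∈ (ρ̄, ρ̃)` with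
`(U × 1_ρ) ∘ R = T`. -/
theorem standard_pair_characterization (C : StrictCTC) (hreg : IsRegularCTC C)
    (ρ ρb : C.Obj) (R : C.Hom C.unit (C.tObj ρb ρ)) (Rb : C.Hom C.unit (C.tObj ρ ρb))
    (hstd : C.IsStandardPair ρ ρb R Rb)
    (ρt : C.Obj) (hconj : C.Conjugate ρ ρt)
    (T : C.Hom C.unit (C.tObj ρt ρ)) :
    (∃ Tb : C.Hom C.unit (C.tObj ρ ρt), C.IsStandardPair ρ ρt T Tb) ↔
    (∃ U : C.Hom ρb ρt, C.IsUnitary U ∧ C.comp (C.tHom U (C.id ρ)) R = T) :=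
  standard_pair_characterization_general C hreg ρ ρb R Rb hstd ρt T
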